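/- arXiv:1610.03693 — 3 statements merged into one kernel-verified Lean document; each statement's English description precedes it below -/
import Mathlib

section
/- For every real a > 1 and real x with 0 < x < 1, the bilateral series ∑_{n ∈ ℤ} a^n x^(a^n) converges absolutely. -/
open Real Filter

theorem stmt_1 (a x : ℝ) (ha : 1 < a) (hx0 : 0 < x) (hx1 : x < 1) :
    Summable (fun n : ℤ => |a ^ (n : ℝ) * x ^ (a ^ (n : ℝ))|) := by
  have ha0 : 0 < a := lt_trans one_pos ha
  rw [summable_int_iff_summable_nat_and_neg]
  constructor
  · -- positive side: ratio test
    apply summable_of_ratio_norm_eventually_le (r := 1/2) (by norm_num)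
    have htend : Tendsto (fun n : ℕ => a * x ^ (a ^ (n : ℝ) * (a - 1))) atTop (nhds 0) := by
      have h1 : Tendsto (fun n : ℕ => a ^ (n : ℝ) * (a - 1)) atTop atTop := by
        apply Tendsto.atTop_mul_const (by linarith)
        have : Tendsto (fun n : ℕ => a ^ (n : ℝ)) atTop atTop := by
          simp_rw [rpow_natCast]
          exact tendsto_pow_atTop_atTop_of_one_lt ha
        exact this
      have h2 := (tendsto_rpow_atTop_of_base_lt_one x (by linarith) hx1).comp h1
      simpa using (tendsto_const_nhds.mul h2 : Tendsto (fun n : ℕ => a * x ^ (a ^ (n : ℝ) * (a - 1))) atTop (nhds (a * 0)))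
    filter_upwards [htend.eventually_le_const (by norm_num : (0:ℝ) < 1/2)] with n hn
    have hxp : (0:ℝ) < x ^ (a ^ (n:ℝ)) := rpow_pos_of_pos hx0 _
    have hap : (0:ℝ) < a ^ (n:ℝ) := rpow_pos_of_pos ha0 _
    have key : a ^ ((n+1 : ℕ) : ℝ) * x ^ (a ^ ((n+1 : ℕ) : ℝ))
        = (a * x ^ (a ^ (n:ℝ) * (a - 1))) * (a ^ (n:ℝ) * x ^ (a ^ (n:ℝ))) := by
      push_cast
      rw [rpow_add ha0, rpow_one]
      rw [show a ^ (n:ℝ) * a = a ^ (n:ℝ) * (a - 1) + a ^ (n:ℝ) by ring,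
        rpow_add hx0]
      ring
    simp only [Real.norm_eq_abs, abs_abs]
    push_cast [Nat.cast_add] at key ⊢
    rw [key, abs_mul]
    have h1 : |a * x ^ (a ^ (n:ℝ) * (a - 1))| ≤ 1/2 := by
      rw [abs_of_pos (by positivity)]; exact hn
    exact mul_le_mul_of_nonneg_right h1 (abs_nonneg _)
  · -- negative side: geometric bound
    apply Summable.of_nonneg_of_le (fun n => abs_nonneg _) (fun n => ?_)
      (summable_geometric_of_lt_one (le_of_lt (inv_pos.mpr ha0)) (inv_lt_one_of_one_lt₀ ha))
    have hap : (0:ℝ) < a ^ ((-n : ℤ) : ℝ) := rpow_pos_of_pos ha0 _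
    have hx' : x ^ (a ^ ((-n : ℤ) : ℝ)) ≤ 1 :=
      rpow_le_one (le_of_lt hx0) (le_of_lt hx1) (le_of_lt hap)
    have hxp : (0:ℝ) < x ^ (a ^ ((-n : ℤ) : ℝ)) := rpow_pos_of_pos hx0 _
    rw [abs_of_pos (by positivity)]
    calc a ^ ((-n : ℤ) : ℝ) * x ^ (a ^ ((-n : ℤ) : ℝ)) ≤ a ^ ((-n : ℤ) : ℝ) * 1 :=
          mul_le_mul_of_nonneg_left hx' hap.le
      _ = a⁻¹ ^ n := by
          rw [mul_one]
          push_cast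
          rw [rpow_neg ha0.le, ← rpow_natCast, inv_rpow ha0.le, rpow_natCast]
end

section
/- The series ∑_{k ∈ ℤ, k ≠ 0} Γ(1 + 2kπi/log 2) · u^(−1 − 2kπi/log 2) converges absolutely for every real u > 0, and its sum is real. -/
/-! The reflection formula gives `|Γ(1 + it)|² = π t / sinh (π t)`, and `sinh x ≥ x⁵ / 240` turns
this into `|Γ(1 + it)| = O(1/t²)`. Since `|u ^ (-1 - it)| = 1/u`, the terms at `t = 2πk / log 2` are
`O(1/k²)`. The `k` and `-k` terms are complex conjugates, so the sum equals its own conjugate. -/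

open Real Complex ComplexConjugate

lemma Real.pow_five_div_le_sinh {x : ℝ} (hx : 0 ≤ x) : x ^ 5 / 240 ≤ Real.sinh x := by
  have hexp := Real.sum_le_exp_of_nonneg hx 6
  norm_num [Finset.sum_range_succ, Nat.factorial] at hexp
  have hexp_neg : Real.exp (-x) ≤ 1 := Real.exp_le_one_iff.2 (neg_nonpos.2 hx)
  rw [Real.sinh_eq]
  nlinarith [pow_nonneg hx 2, pow_nonneg hx 3, pow_nonneg hx 4]

lemma Real.div_sinh_le {x : ℝ} (hx : x ≠ 0) : x / Real.sinh x ≤ 240 / x ^ 4 := by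
  wlog hpos : 0 < x generalizing x
  · have := this (neg_ne_zero.2 hx) (neg_pos.2 (lt_of_le_of_ne (not_lt.1 hpos) hx))
    rwa [Real.sinh_neg, neg_div_neg_eq, Even.neg_pow (by decide)] at this
  have hsinh : 0 < Real.sinh x := Real.sinh_pos_iff.2 hpos
  rw [div_le_div_iff₀ hsinh (by positivity)]
  nlinarith [Real.pow_five_div_le_sinh hpos.le]

namespace Complex

lemma norm_Gamma_one_add_mul_I_sq {t : ℝ} (ht : t ≠ 0) :
    ‖Gamma (1 + t * I)‖ ^ 2 = π * t / Real.sinh (π * t) := by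
  have htI : (t : ℂ) * I ≠ 0 := mul_ne_zero (ofReal_ne_zero.2 ht) I_ne_zero
  have hsinh : (Real.sinh (π * t) : ℂ) ≠ 0 :=
    ofReal_ne_zero.2 (Real.sinh_ne_zero.2 (mul_ne_zero Real.pi_ne_zero ht))
  have hconj : conj (Gamma (1 + t * I)) = Gamma (1 - t * I) := by
    rw [← Gamma_conj, map_add, map_one, map_mul, conj_ofReal, conj_I, mul_neg, ← sub_eq_add_neg]
  have hsin : sin (π * (t * I)) = Real.sinh (π * t) * I := by
    rw [← mul_assoc, ← ofReal_mul, sin_mul_I, ofReal_sinh]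
  have hreflect : Gamma (t * I) * Gamma (1 - t * I) = π / (Real.sinh (π * t) * I) := by
    rw [Gamma_mul_Gamma_one_sub, hsin]
  suffices ((‖Gamma (1 + t * I)‖ ^ 2 : ℝ) : ℂ) = ((π * t / Real.sinh (π * t) : ℝ) : ℂ) by
    exact_mod_cast this
  rw [Complex.sq_norm, ← mul_conj, hconj, add_comm, Gamma_add_one _ htI, mul_assoc, hreflect]
  push_cast
  field_simp

lemma norm_Gamma_one_add_mul_I_le {t : ℝ} (ht : t ≠ 0) :
    ‖Gamma (1 + t * I)‖ ≤ 16 / (π * t) ^ 2 := by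
  have hπt : π * t ≠ 0 := mul_ne_zero Real.pi_ne_zero ht
  refine (pow_le_pow_iff_left₀ (norm_nonneg _) (by positivity) two_ne_zero).1 ?_
  calc ‖Gamma (1 + t * I)‖ ^ 2 = π * t / Real.sinh (π * t) := norm_Gamma_one_add_mul_I_sq ht
    _ ≤ 240 / (π * t) ^ 4 := Real.div_sinh_le hπt
    _ ≤ (16 / (π * t) ^ 2) ^ 2 := by
      rw [div_pow, ← pow_mul]
      gcongr
      norm_num

lemma summable_norm_Gamma_one_add_int_mul_I {a : ℝ} (ha : a ≠ 0) :
    Summable fun k : ℤ => ‖Gamma (1 + (a * k : ℝ) * I)‖ := by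
  refine Summable.of_norm_bounded_eventually
    ((summable_one_div_int_pow.2 one_lt_two).mul_left (16 / (π * a) ^ 2)) ?_
  filter_upwards [Filter.eventually_cofinite_ne 0] with k hk
  calc ‖‖Gamma (1 + (a * k : ℝ) * I)‖‖ = ‖Gamma (1 + (a * k : ℝ) * I)‖ := norm_norm _
    _ ≤ 16 / (π * (a * k)) ^ 2 :=
      norm_Gamma_one_add_mul_I_le (mul_ne_zero ha (Int.cast_ne_zero.2 hk))
    _ = 16 / (π * a) ^ 2 * (1 / (k : ℝ) ^ 2) := by ring

lemma conj_Gamma_mul_ofReal_cpow_neg {u : ℝ} (hu : 0 ≤ u) (s : ℂ) :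
    conj (Gamma s * (u : ℂ) ^ (-s)) = Gamma (conj s) * (u : ℂ) ^ (-conj s) := by
  have harg : arg (u : ℂ) ≠ π := by
    rw [arg_ofReal_of_nonneg hu]
    exact Real.pi_ne_zero.symm
  rw [map_mul, ← Gamma_conj, ← map_neg, cpow_conj _ _ harg, conj_ofReal]

lemma im_tsum_eq_zero_of_conj_eq_comp {α : Type*} (f : α → ℂ) (e : α ≃ α)
    (h : ∀ k, conj (f k) = f (e k)) : (∑' k, f k).im = 0 := by
  refine conj_eq_iff_im.1 ?_
  rw [conj_tsum]
  simp_rw [h]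
  exact e.tsum_eq f

end Complex

theorem stmt_9 (u : ℝ) (hu : 0 < u) :
    Summable (fun k : {k : ℤ // k ≠ 0} =>
      ‖Complex.Gamma (1 + 2 * (k.1 : ℂ) * Real.pi * Complex.I / Real.log 2) *
          (u : ℂ) ^ (-1 - 2 * (k.1 : ℂ) * Real.pi * Complex.I / Real.log 2)‖) ∧
    (∑' k : {k : ℤ // k ≠ 0},
      Complex.Gamma (1 + 2 * (k.1 : ℂ) * Real.pi * Complex.I / Real.log 2) *
        (u : ℂ) ^ (-1 - 2 * (k.1 : ℂ) * Real.pi * Complex.I / Real.log 2)).im = 0 := by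
  set a : ℝ := 2 * π / Real.log 2 with ha_def
  have ha : a ≠ 0 := div_ne_zero (by positivity) (Real.log_pos one_lt_two).ne'
  have hterm : ∀ k : ℤ, Gamma (1 + 2 * (k : ℂ) * π * I / Real.log 2) *
      (u : ℂ) ^ (-1 - 2 * (k : ℂ) * π * I / Real.log 2) =
      Gamma (1 + (a * k : ℝ) * I) * (u : ℂ) ^ (-(1 + (a * k : ℝ) * I)) := by
    intro k
    rw [neg_add', show 2 * (k : ℂ) * π * I / Real.log 2 = (a * k : ℝ) * I by
      rw [ha_def]; push_cast; ring]
  simp_rw [hterm]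
  constructor
  · have hnorm : ∀ k : ℤ, ‖Gamma (1 + (a * k : ℝ) * I) * (u : ℂ) ^ (-(1 + (a * k : ℝ) * I))‖ =
        ‖Gamma (1 + (a * k : ℝ) * I)‖ * u ^ (-1 : ℝ) := by
      intro k
      rw [norm_mul, norm_cpow_eq_rpow_re_of_pos hu]
      simp
    simp_rw [hnorm]
    exact ((summable_norm_Gamma_one_add_int_mul_I ha).subtype _).mul_right _
  · refine im_tsum_eq_zero_of_conj_eq_comp _ ((Equiv.neg ℤ).subtypeEquiv fun _ => neg_ne_zero.symm)
      fun k => ?_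
    rw [conj_Gamma_mul_ofReal_cpow_neg hu.le]
    have hconj : conj (1 + (a * k.1 : ℝ) * I) = 1 + (a * (-k.1 : ℤ) : ℝ) * I := by
      rw [map_add, map_one, map_mul, conj_ofReal, conj_I]
      push_cast
      ring
    rw [hconj]
    rfl
end

section
/- For real s > 0, the bilateral sum F(s) = ∑_{n ∈ ℤ} 2^n e^{−2^n s} satisfies F(2s) = F(s)/2, and s·F(s) is a bounded function of s on (0,∞). -/
noncomputable def F (s : ℝ) : ℝ :=
  ∑' n : ℤ, (2 : ℝ) ^ (n : ℝ) * Real.exp (-(2 : ℝ) ^ (n : ℝ) * s)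

namespace Stmt16Aux

open Real

/-- the summand -/
noncomputable def f (s : ℝ) (n : ℤ) : ℝ :=
  (2 : ℝ) ^ (n : ℝ) * Real.exp (-(2 : ℝ) ^ (n : ℝ) * s)

lemma F_eq (s : ℝ) : F s = ∑' n : ℤ, f s n := rfl

lemma f_nonneg (s : ℝ) (n : ℤ) : 0 ≤ f s n :=
  mul_nonneg (rpow_nonneg (by norm_num) _) (exp_nonneg _)

lemma g_le (t : ℝ) (ht : 0 < t) : t * Real.exp (-t) ≤ 4 / t := by
  have h1 : t / 2 ≤ Real.exp (t / 2) := by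
    nlinarith [Real.add_one_le_exp (t / 2)]
  have h2 : t ^ 2 / 4 ≤ Real.exp t := by
    have : Real.exp t = Real.exp (t / 2) * Real.exp (t / 2) := by
      rw [← Real.exp_add]; ring_nf
    nlinarith [Real.exp_pos (t / 2)]
  have hprod : Real.exp (-t) * Real.exp t = 1 := by
    rw [← Real.exp_add]; simp
  rw [le_div_iff₀ ht]
  nlinarith [Real.exp_pos t, Real.exp_pos (-t),
    mul_nonneg (sub_nonneg.mpr h2) (Real.exp_pos (-t)).le]

lemma two_rpow_pos (x : ℝ) : 0 < (2 : ℝ) ^ x := rpow_pos_of_pos (by norm_num) x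

lemma f_pos_le (u : ℝ) (hu : 1 ≤ u) (k : ℕ) :
    f u (k : ℤ) ≤ 4 * (1 / 2 : ℝ) ^ k := by
  have hup : 0 < u := lt_of_lt_of_le one_pos hu
  have ht : (0 : ℝ) < (2 : ℝ) ^ ((k : ℤ) : ℝ) * u :=
    mul_pos (two_rpow_pos _) hup
  have h := g_le _ ht
  have hrw : (2 : ℝ) ^ ((k : ℤ) : ℝ) = (2 : ℝ) ^ (k : ℕ) := by
    rw [show (((k : ℤ)) : ℝ) = (k : ℝ) by push_cast; ring, rpow_natCast]
  -- f u k = (g (2^k u)) / u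
  have hfe : f u (k : ℤ) = ((2 : ℝ) ^ ((k : ℤ) : ℝ) * u *
      Real.exp (-((2 : ℝ) ^ ((k : ℤ) : ℝ) * u))) / u := by
    unfold f
    field_simp
  rw [hfe]
  have h2 : ((2 : ℝ) ^ ((k : ℤ) : ℝ) * u *
      Real.exp (-((2 : ℝ) ^ ((k : ℤ) : ℝ) * u))) / u ≤
      (4 / ((2 : ℝ) ^ ((k : ℤ) : ℝ) * u)) / u :=
    by gcongr
  refine h2.trans ?_
  rw [hrw]
  have h2k : (0 : ℝ) < (2 : ℝ) ^ (k : ℕ) := by positivity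
  have hu2 : 1 ≤ u * u := one_le_mul_of_one_le_of_one_le hu hu
  rw [div_div]
  have : (4 : ℝ) * (1 / 2) ^ k = 4 / (2 : ℝ) ^ (k : ℕ) := by
    rw [div_pow, one_pow]; ring
  rw [this]
  apply div_le_div_of_nonneg_left (by norm_num) h2k
  nlinarith

lemma f_neg_le (u : ℝ) (hu : 0 ≤ u) (k : ℕ) :
    f u (-(k + 1) : ℤ) ≤ (1 / 2 : ℝ) ^ k := by
  have h1 : Real.exp (-(2 : ℝ) ^ (((-(k + 1) : ℤ)) : ℝ) * u) ≤ 1 := by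
    apply Real.exp_le_one_iff.mpr
    have := two_rpow_pos (((-(k + 1) : ℤ)) : ℝ)
    nlinarith
  have h2 : (2 : ℝ) ^ (((-(k + 1) : ℤ)) : ℝ) ≤ (1 / 2 : ℝ) ^ k := by
    have he : ((1 : ℝ) / 2) ^ k = (2 : ℝ) ^ (-(k : ℝ)) := by
      rw [Real.rpow_neg (by norm_num), Real.rpow_natCast]
      simp [one_div, inv_pow]
    rw [he]
    apply Real.rpow_le_rpow_left_iff (by norm_num : (1:ℝ) < 2) |>.mpr
    push_cast; linarith
  calc f u (-(k + 1) : ℤ) ≤ (2 : ℝ) ^ (((-(k + 1) : ℤ)) : ℝ) * 1 := by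
        unfold f
        exact mul_le_mul_of_nonneg_left h1 (two_rpow_pos _).le
    _ ≤ (1 / 2 : ℝ) ^ k := by rw [mul_one]; exact h2

lemma summable_half : Summable (fun k : ℕ => (1 / 2 : ℝ) ^ k) :=
  summable_geometric_of_lt_one (by norm_num) (by norm_num)

lemma summable_pos (u : ℝ) (hu : 1 ≤ u) : Summable (fun k : ℕ => f u (k : ℤ)) :=
  Summable.of_nonneg_of_le (fun k => f_nonneg u _)
    (fun k => f_pos_le u hu k) (summable_half.mul_left 4)

lemma summable_neg (u : ℝ) (hu : 0 ≤ u) :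
    Summable (fun k : ℕ => f u (-(k + 1) : ℤ)) :=
  Summable.of_nonneg_of_le (fun k => f_nonneg u _)
    (fun k => f_neg_le u hu k) summable_half

lemma F_le (u : ℝ) (hu : 1 ≤ u) : F u ≤ 10 := by
  have h1 := summable_pos u hu
  have h2 := summable_neg u (by linarith)
  rw [F_eq, tsum_of_nat_of_neg_add_one h1 h2]
  have hg : ∑' k : ℕ, (1 / 2 : ℝ) ^ k = 2 := by
    rw [tsum_geometric_of_lt_one (by norm_num) (by norm_num)]; norm_num
  have hA : ∑' k : ℕ, f u (k : ℤ) ≤ 8 := by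
    calc ∑' k : ℕ, f u (k : ℤ) ≤ ∑' k : ℕ, 4 * (1 / 2 : ℝ) ^ k :=
          Summable.tsum_le_tsum (fun k => f_pos_le u hu k) h1 (summable_half.mul_left 4)
      _ = 8 := by rw [tsum_mul_left, hg]; norm_num
  have hB : ∑' k : ℕ, f u (-(k + 1) : ℤ) ≤ 2 := by
    calc ∑' k : ℕ, f u (-(k + 1) : ℤ) ≤ ∑' k : ℕ, (1 / 2 : ℝ) ^ k :=
          Summable.tsum_le_tsum (fun k => f_neg_le u (by linarith) k) h2 summable_half
      _ = 2 := hg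
  linarith

lemma F_nonneg (s : ℝ) : 0 ≤ F s :=
  tsum_nonneg (fun n => f_nonneg s n)

end Stmt16Aux

open Stmt16Aux Real in
theorem stmt_16 :
    (∀ s : ℝ, 0 < s → F (2 * s) = F s / 2) ∧
    ∃ C : ℝ, ∀ s : ℝ, 0 < s → |s * F s| ≤ C := by
  constructor
  · intro s hs
    have key : F s = 2 * F (2 * s) := by
      rw [F_eq, ← (Equiv.addRight (1 : ℤ)).tsum_eq (f s)]
      have : ∀ n : ℤ, f s (Equiv.addRight (1 : ℤ) n) = 2 * f (2 * s) n := by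
        intro n
        simp only [Equiv.coe_addRight]
        unfold f
        have hc : ((n + 1 : ℤ) : ℝ) = (n : ℝ) + 1 := by push_cast; ring
        rw [hc, rpow_add (by norm_num : (0:ℝ) < 2), rpow_one]
        ring_nf
      rw [tsum_congr this, tsum_mul_left, F_eq]
    rw [key]; ring
  · refine ⟨20, fun s hs => ?_⟩
    set l : ℝ := Real.logb 2 s with hl
    set j : ℤ := -⌊l⌋ with hj
    set u : ℝ := (2 : ℝ) ^ ((j : ℤ) : ℝ) * s with hu
    have hsrw : s = (2 : ℝ) ^ l := (rpow_logb (by norm_num) (by norm_num) hs).symm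
    have hue : u = (2 : ℝ) ^ (l - (⌊l⌋ : ℝ)) := by
      rw [hu, hsrw, ← rpow_add (by norm_num : (0:ℝ) < 2)]
      congr 1
      rw [hj]
      push_cast
      ring
    have hu1 : 1 ≤ u := by
      rw [hue]
      calc (1 : ℝ) = (2 : ℝ) ^ (0 : ℝ) := by rw [rpow_zero]
        _ ≤ _ := by
          apply rpow_le_rpow_left_iff (by norm_num : (1:ℝ) < 2) |>.mpr
          have := Int.floor_le l
          linarith
    have hu2 : u < 2 := by
      rw [hue]
      calc (2 : ℝ) ^ (l - (⌊l⌋ : ℝ)) < (2 : ℝ) ^ (1 : ℝ) := by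
            apply rpow_lt_rpow_left_iff (by norm_num : (1:ℝ) < 2) |>.mpr
            have := Int.lt_floor_add_one l
            linarith
        _ = 2 := by rw [rpow_one]
    -- s * F s = u * F u
    have key : s * F s = u * F u := by
      rw [F_eq, F_eq, ← tsum_mul_left, ← tsum_mul_left,
        ← (Equiv.addRight j).tsum_eq (fun n => s * f s n)]
      apply tsum_congr
      intro k
      simp only [Equiv.coe_addRight]
      unfold f
      have hc : ((k + j : ℤ) : ℝ) = (k : ℝ) + (j : ℝ) := by push_cast; ring
      rw [hc, rpow_add (by norm_num : (0:ℝ) < 2)]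
      rw [hu]
      ring_nf
    rw [key, abs_of_nonneg (mul_nonneg (by linarith) (F_nonneg u))]
    calc u * F u ≤ 2 * 10 := by
          apply mul_le_mul hu2.le (F_le u hu1) (F_nonneg u) (by norm_num)
      _ = 20 := by norm_num
end
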